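/- arXiv:cs/0505030 — 4 statements merged into one kernel-verified Lean document; each statement's English description precedes it below -/
import Mathlib

section
/- Let K be a field and M ∈ K[x]^{(n+p)×n} of rank n. Let N = [N_p S] ∈ K[x]^{p×(n+p)} be such that NM = 0, where N_p ∈ K[x]^{p×n} and S ∈ K[x]^{p×p} is non-singular. Then the rows of N form a basis of the left nullspace module of M (as a K[x]-module) if and only if the left matrix fraction description S^{-1}N_p is irreducible, i.e., S and N_p are left coprime. -/
/-!
If `U` is a non-singular common left divisor of `S` and `N_p`, then `N = U N₂` with `N₂ M = 0`.
When the rows of `N` form a basis, `N₂ = X N`, and the independence of the rows of `N` forces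
`U X = 1`, so `U` is unimodular.

Conversely, the left nullspace module is free over the PID `K[x]`. Its rank is at most the
dimension `(n + p) - n` of the left nullspace of `M` over `K(x)`, and it contains the `p`
independent rows of `N`, so it has a basis `B` with `p` rows. Writing `N = W B` exhibits `W` as a common left divisor of `S` and
`N_p`. So `W` is unimodular and `B = W⁻¹ N`.
-/

open Polynomial Matrix

namespace PolyNull

variable {K : Type*} [Field K]

/-- Degree of a polynomial row vector: max of `natDegree` of its entries. -/
noncomputable def vecDeg {m : Type*} [Fintype m] (v : m → Polynomial K) : ℕ :=
  Finset.univ.sup fun i => (v i).natDegree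

/-- Degree of a polynomial matrix: max of degrees of its entries. -/
noncomputable def matDeg {m n : Type*} [Fintype m] [Fintype n]
    (M : Matrix m n (Polynomial K)) : ℕ :=
  Finset.univ.sup fun ij : m × n => (M ij.1 ij.2).natDegree

/-- View a polynomial matrix as a matrix over the rational function field `K(x)`. -/
noncomputable def ratMat {m n : Type*} (M : Matrix m n (Polynomial K)) :
    Matrix m n (RatFunc K) :=
  M.map (algebraMap (Polynomial K) (RatFunc K))

/-- Rank of a polynomial matrix (its rank over `K(x)`). -/
noncomputable def polyRank {m n : Type*} [Fintype m] [Fintype n]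
    (M : Matrix m n (Polynomial K)) : ℕ :=
  (ratMat M).rank

/-- The left nullspace `K[x]`-module of a polynomial matrix. -/
noncomputable def leftNullMod {m n : Type*} [Fintype m] (M : Matrix m n (Polynomial K)) :
    Submodule (Polynomial K) (m → Polynomial K) :=
  LinearMap.ker M.vecMulLinear

/-- `N` is a family of rows forming a basis of the left nullspace module of `M`. -/
def IsNullBasis {m n ι : Type*} [Fintype m] (M : Matrix m n (Polynomial K))
    (N : ι → (m → Polynomial K)) : Prop :=
  LinearIndependent (Polynomial K) N ∧
    Submodule.span (Polynomial K) (Set.range N) = leftNullMod M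

/-- Minimal basis of the left nullspace module: a basis whose sorted row degrees are
pointwise minimal among all bases; equivalently (order-free formulation), for every
degree threshold it has at least as many rows of degree at most the threshold as
any other basis. -/
def IsMinimalNullBasis {m n ι : Type*} [Fintype m] [Fintype ι]
    (M : Matrix m n (Polynomial K)) (N : ι → (m → Polynomial K)) : Prop :=
  IsNullBasis M N ∧
    ∀ N' : ι → (m → Polynomial K), IsNullBasis M N' →
      ∀ δ : ℕ, (Finset.univ.filter fun i => vecDeg (N' i) ≤ δ).card
        ≤ (Finset.univ.filter fun i => vecDeg (N i) ≤ δ).card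

open scoped Classical in
/-- McMillan degree of a rank-`r` polynomial matrix: the maximum of the degrees of the
determinants of its `r × r` submatrices. -/
noncomputable def mcMillanDeg {m n : Type*} [Fintype m] [Fintype n]
    (M : Matrix m n (Polynomial K)) (r : ℕ) : ℕ :=
  Finset.univ.sup fun fg : (Fin r → m) × (Fin r → n) =>
    if Function.Injective fg.1 ∧ Function.Injective fg.2 then
      (M.submatrix fg.1 fg.2).det.natDegree
    else 0

/-- Rank of the evaluation of a polynomial matrix at a point of the algebraic closure. -/
noncomputable def evalRank {m n : Type*} [Fintype n]
    (M : Matrix m n (Polynomial K)) (x₀ : AlgebraicClosure K) : ℕ :=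
  (M.map fun f => Polynomial.aeval x₀ f).rank

/-- A polynomial matrix is irreducible (for its rank `r`) if it has rank `r` at every
point of the algebraic closure of `K`. -/
def IsIrreducibleMat {m n : Type*} [Fintype n]
    (M : Matrix m n (Polynomial K)) (r : ℕ) : Prop :=
  ∀ x₀ : AlgebraicClosure K, evalRank M x₀ = r

/-- Leading row coefficient matrix of a polynomial matrix. -/
noncomputable def leadingRowMatrix {k m : Type*} [Fintype m]
    (N : Matrix k m (Polynomial K)) : Matrix k m K :=
  fun i j => (N i j).coeff (vecDeg (N i))

/-- A polynomial matrix is row-reduced if its leading row coefficient matrix has full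
row rank. -/
def IsRowReduced {k m : Type*} [Fintype k] [Fintype m]
    (N : Matrix k m (Polynomial K)) : Prop :=
  (leadingRowMatrix N).rank = Fintype.card k

/-- `S` and `N` are left coprime: every non-singular common left divisor is unimodular. -/
def LeftCoprime {p n : Type*} [Fintype p] [DecidableEq p]
    (S : Matrix p p (Polynomial K)) (N : Matrix p n (Polynomial K)) : Prop :=
  ∀ U : Matrix p p (Polynomial K), U.det ≠ 0 →
    (∃ S', S = U * S') → (∃ N', N = U * N') → IsUnit U.det

/-- `C` and `T` are right coprime: every non-singular common right divisor is unimodular. -/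
def RightCoprime {p n : Type*} [Fintype p] [DecidableEq p]
    (C : Matrix n p (Polynomial K)) (T : Matrix p p (Polynomial K)) : Prop :=
  ∀ U : Matrix p p (Polynomial K), U.det ≠ 0 →
    (∃ C', C = C' * U) → (∃ T', T = T' * U) → IsUnit U.det

section MatrixAlgebra

variable {R : Type*} [CommRing R] {ι κ m : Type*} [Fintype ι]

theorem span_row_le_span_row_iff {A : Matrix ι m R} {B : Matrix κ m R} :
    Submodule.span R (Set.range B.row) ≤ Submodule.span R (Set.range A.row) ↔
      ∃ W : Matrix κ ι R, B = W * A := by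
  rw [Submodule.span_le, ← range_vecMulLinear]
  constructor
  · intro h
    choose w hw using fun k => h ⟨k, rfl⟩
    exact ⟨Matrix.of w, funext fun k => (hw k).symm⟩
  · rintro ⟨W, rfl⟩ _ ⟨k, rfl⟩
    exact ⟨W k, rfl⟩

theorem eq_of_mul_eq_mul_of_linearIndependent_row {A : Matrix ι m R}
    (hA : LinearIndependent R A.row) {W W' : Matrix κ ι R} (h : W * A = W' * A) : W = W' :=
  funext fun k => Matrix.vecMul_injective_iff.2 hA (congrFun h k)

theorem eq_zero_of_mul_eq_zero_of_det_ne_zero [IsDomain R] [DecidableEq ι] {U : Matrix ι ι R}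
    (hU : U.det ≠ 0) {X : Matrix ι m R} (h : U * X = 0) : X = 0 := by
  ext i j
  have hcol : U *ᵥ (fun i => X i j) = 0 := funext fun k => congrFun (congrFun h k) j
  exact congrFun (eq_zero_of_mulVec_eq_zero hU hcol) i

theorem linearIndependent_row_fromCols [IsDomain R] [DecidableEq ι] (A : Matrix ι m R)
    {S : Matrix ι ι R} (hS : S.det ≠ 0) : LinearIndependent R (fromCols A S).row :=
  LinearIndependent.of_comp (LinearMap.funLeft R R Sum.inr)
    (linearIndependent_rows_of_det_ne_zero hS)

theorem exists_span_row_eq_of_finrank_eq [IsDomain R] [IsPrincipalIdealRing R] [Finite m]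
    {L : Submodule R (m → R)} (h : Module.finrank R L = Fintype.card ι) :
    ∃ B : Matrix ι m R, Submodule.span R (Set.range B.row) = L := by
  let b := (Module.finBasisOfFinrankEq R L h).reindex (Fintype.equivFin ι).symm
  refine ⟨fun i => (b i : m → R), ?_⟩
  change Submodule.span R (Set.range (L.subtype ∘ b)) = L
  rw [Set.range_comp, Submodule.span_image, b.span_eq, Submodule.map_top,
    Submodule.range_subtype]

end MatrixAlgebra

theorem finrank_ker_vecMulLinear_add_rank {F m n : Type*} [Field F] [Fintype m] [Fintype n]
    (A : Matrix m n F) :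
    Module.finrank F (LinearMap.ker A.vecMulLinear) + A.rank = Fintype.card m := by
  rw [← A.rank_transpose, Matrix.rank, ← vecMulLinear_transpose, transpose_transpose, add_comm,
    LinearMap.finrank_range_add_finrank_ker, Module.finrank_fintype_fun_eq_card]

theorem span_row_le_leftNullMod_iff {ι m n : Type*} [Fintype m] {A : Matrix ι m K[X]}
    {M : Matrix m n K[X]} :
    Submodule.span K[X] (Set.range A.row) ≤ leftNullMod M ↔ A * M = 0 := by
  rw [Submodule.span_le]
  constructor
  · exact fun h => funext fun i => h ⟨i, rfl⟩
  · rintro h _ ⟨i, rfl⟩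
    exact congrFun h i

theorem finrank_leftNullMod_add_polyRank_le {m n : Type*} [Fintype m] [Fintype n]
    (M : Matrix m n K[X]) :
    Module.finrank K[X] (leftNullMod M) + polyRank M ≤ Fintype.card m := by
  let b := Module.Free.chooseBasis K[X] (leftNullMod M)
  let toRat : leftNullMod M →ₗ[K[X]] m → RatFunc K :=
    LinearMap.compLeft (Algebra.linearMap K[X] (RatFunc K)) m ∘ₗ (leftNullMod M).subtype
  have hinj : Function.Injective toRat :=
    (IsFractionRing.injective K[X] (RatFunc K)).comp_left.comp Subtype.val_injective
  have hind : LinearIndependent (RatFunc K) (toRat ∘ b) :=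
    (LinearIndependent.iff_fractionRing K[X] (RatFunc K)).1
      (b.linearIndependent.map' toRat (LinearMap.ker_eq_bot.2 hinj))
  have hker : ∀ i, toRat (b i) ∈ LinearMap.ker (ratMat M).vecMulLinear := fun i =>
    funext fun j => by
      have hb : (b i : m → K[X]) ᵥ* M = 0 := (b i).2
      have h := (algebraMap K[X] (RatFunc K)).map_vecMul M (b i) j
      rw [hb, Pi.zero_apply, map_zero] at h
      exact h.symm
  let kerRows : Module.Free.ChooseBasisIndex K[X] (leftNullMod M) →
      LinearMap.ker (ratMat M).vecMulLinear := fun i => ⟨toRat (b i), hker i⟩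
  have hcard := (hind.of_comp (v := kerRows) (LinearMap.ker _).subtype).fintype_card_le_finrank
  rw [Module.finrank_eq_card_chooseBasisIndex, polyRank,
    ← finrank_ker_vecMulLinear_add_rank (ratMat M)]
  exact Nat.add_le_add_right hcard _

section Coprime

variable {p q r : Type*} [Fintype p] [Fintype q] [DecidableEq p]
  {M : Matrix (q ⊕ p) r K[X]} {Np : Matrix p q K[X]} {S : Matrix p p K[X]}

theorem leftCoprime_of_isNullBasis (hNM : fromCols Np S * M = 0)
    (hbasis : IsNullBasis M (fromCols Np S).row) : LeftCoprime S Np := by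
  rintro U hU ⟨S', rfl⟩ hNp
  -- the witness in `LeftCoprime` is elaborated at type `CStarMatrix`; restate it as a `Matrix`
  obtain ⟨N', rfl⟩ : ∃ N' : Matrix p q K[X], Np = U * N' := hNp
  obtain ⟨hind, hspan⟩ := hbasis
  rw [← mul_fromCols] at hNM hind hspan
  have hN'M : fromCols N' S' * M = 0 :=
    eq_zero_of_mul_eq_zero_of_det_ne_zero hU (by rwa [← Matrix.mul_assoc])
  obtain ⟨X, hX⟩ := span_row_le_span_row_iff.1 (hspan ▸ span_row_le_leftNullMod_iff.2 hN'M)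
  have hUX : U * X = 1 := eq_of_mul_eq_mul_of_linearIndependent_row hind <| by
    rw [Matrix.one_mul, Matrix.mul_assoc, ← hX]
  exact isUnit_det_of_right_inverse hUX

theorem isNullBasis_of_leftCoprime [Fintype r] (hrank : polyRank M = Fintype.card q)
    (hS : S.det ≠ 0) (hNM : fromCols Np S * M = 0) (hcop : LeftCoprime S Np) :
    IsNullBasis M (fromCols Np S).row := by
  have hind := linearIndependent_row_fromCols Np hS
  have hle := span_row_le_leftNullMod_iff.2 hNM
  have hfinrank : Module.finrank K[X] (leftNullMod M) = Fintype.card p := by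
    refine le_antisymm ?_ ?_
    · have := finrank_leftNullMod_add_polyRank_le M
      rw [hrank, Fintype.card_sum] at this
      omega
    · let rows : p → leftNullMod M := fun i =>
        ⟨fromCols Np S i, hle (Submodule.subset_span ⟨i, rfl⟩)⟩
      exact (hind.of_comp (v := rows) (leftNullMod M).subtype).fintype_card_le_finrank
  obtain ⟨B, hB⟩ := exists_span_row_eq_of_finrank_eq hfinrank
  obtain ⟨W, hW⟩ := span_row_le_span_row_iff.1 (hle.trans hB.ge)
  rw [← fromCols_toCols B, mul_fromCols] at hW
  obtain ⟨hNp, hSW⟩ := fromCols_inj hW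
  have hW_det : W.det ≠ 0 := fun h => hS (by rw [hSW, det_mul, h, zero_mul])
  have hW_unit := hcop W hW_det ⟨_, hSW⟩ ⟨_, hNp⟩
  refine ⟨hind, le_antisymm hle ?_⟩
  rw [← hB]
  refine span_row_le_span_row_iff.2 ⟨W⁻¹, ?_⟩
  rw [hW, ← mul_fromCols, fromCols_toCols, nonsing_inv_mul_cancel_left _ _ hW_unit]

end Coprime

/-- For `M ∈ K[x]^{(n+p)×n}` of rank `n` and `N = [N_p  S]` with
`N M = 0` and `S` non-singular, the rows of `N` form a basis of the left nullspace
module of `M` iff `S` and `N_p` are left coprime. -/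
theorem nullspace_basis_iff_left_coprime
    {n p : ℕ} (M : Matrix (Fin n ⊕ Fin p) (Fin n) (Polynomial K))
    (hrank : polyRank M = n)
    (Np : Matrix (Fin p) (Fin n) (Polynomial K))
    (S : Matrix (Fin p) (Fin p) (Polynomial K))
    (hS : S.det ≠ 0)
    (hNM : Matrix.fromCols Np S * M = 0) :
    IsNullBasis M (fun i => Matrix.fromCols Np S i) ↔ LeftCoprime S Np :=
  ⟨leftCoprime_of_isNullBasis hNM,
    isNullBasis_of_leftCoprime (by rw [hrank, Fintype.card_fin]) hS hNM⟩

end PolyNull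
end

section
/- Let K be a field and H a p×n matrix over the field of rational functions K(x). Let P_H denote the K[x]-module of row vectors u ∈ K[x]^p such that uH ∈ K[x]^n. Let S ∈ K[x]^{p×p} be non-singular and N ∈ K[x]^{p×n} with S^{-1}N = H. Then S^{-1}N is an irreducible (coprime) matrix fraction description of H if and only if the rows of S form a basis of P_H. -/
open Polynomial Matrix

namespace PolyNull

variable {K : Type*} [Field K]

/-- The `K[x]`-module `P_H` of polynomial row vectors `u` such that `u • H` is polynomial
(entrywise in the image of `K[x]` inside `K(x)`). -/
noncomputable def PH {p n : Type*} [Fintype p] (H : Matrix p n (RatFunc K)) :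
    Submodule (Polynomial K) (p → Polynomial K) where
  carrier := {u | ∀ j, ∑ i, algebraMap (Polynomial K) (RatFunc K) (u i) * H i j
      ∈ Set.range (algebraMap (Polynomial K) (RatFunc K))}
  zero_mem' := by
    intro j
    refine ⟨0, ?_⟩
    simp
  add_mem' := by
    intro a b ha hb j
    obtain ⟨qa, hqa⟩ := ha j
    obtain ⟨qb, hqb⟩ := hb j
    refine ⟨qa + qb, ?_⟩
    simp only [Pi.add_apply, map_add, add_mul, Finset.sum_add_distrib]
    rw [hqa, hqb]
  smul_mem' := by
    intro c u hu j
    obtain ⟨qa, hqa⟩ := hu j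
    refine ⟨c * qa, ?_⟩
    simp only [Pi.smul_apply, smul_eq_mul, _root_.map_mul, mul_assoc, ← Finset.mul_sum]
    rw [hqa]

/-!
The rows of `S` lie in `P_H` because `S H = N`, and they are independent since `det S ≠ 0`; so,
`K[x]` being a PID, `P_H` is free of rank `p` and has a square generating matrix `T`, whence
`S = W T` and `N = W (T H)`. Coprimality makes `W` unimodular, so the rows of `S` generate `P_H`.
Conversely, if they do and `S = U S'`, `N = U N'`, then `S' H = N'` puts the rows of `S'` in
`P_H`, so `S' = V S = V U S'` and `det V · det U = 1`.
-/

theorem _root_.Matrix.span_rows_le_span_rows_iff_exists_eq_mul {R m l k : Type*}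
    [CommSemiring R] [Fintype l] (A : Matrix m k R) (B : Matrix l k R) :
    Submodule.span R (Set.range fun i => A i) ≤ Submodule.span R (Set.range fun i => B i) ↔
      ∃ W : Matrix m l R, A = W * B := by
  simp only [Submodule.span_le, Set.range_subset_iff, SetLike.mem_coe,
    Submodule.mem_span_range_iff_exists_fun]
  constructor
  · intro h
    choose W hW using h
    refine ⟨Matrix.of W, ?_⟩
    ext i j
    simp [← hW i, Matrix.mul_apply, Finset.sum_apply]
  · rintro ⟨W, rfl⟩ i
    refine ⟨W i, ?_⟩
    ext j
    simp [Matrix.mul_apply, Finset.sum_apply]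

theorem _root_.Submodule.nonempty_basis_of_linearIndependent {R ι : Type*} [CommRing R]
    [IsDomain R] [IsPrincipalIdealRing R] [Fintype ι] (P : Submodule R (ι → R))
    {v : ι → ι → R} (hv : LinearIndependent R v) (hvP : ∀ i, v i ∈ P) :
    Nonempty (Module.Basis ι R P) := by
  obtain ⟨m, b⟩ := P.basisOfPid (Pi.basisFun R ι)
  have hle : m ≤ Fintype.card ι := by
    simpa using (Pi.basisFun R ι).card_le_card_of_linearIndependent
      (b.linearIndependent.map' P.subtype P.ker_subtype)
  have hge : Fintype.card ι ≤ m := by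
    simpa using b.card_le_card_of_linearIndependent
      (LinearIndependent.of_comp P.subtype (v := fun i => (⟨v i, hvP i⟩ : P)) hv)
  exact ⟨b.reindex (Fintype.equivFinOfCardEq (le_antisymm hge hle)).symm⟩

theorem _root_.Module.Basis.span_range_subtype {R M ι : Type*} [Ring R] [AddCommGroup M]
    [Module R M] {P : Submodule R M} (b : Module.Basis ι R P) :
    Submodule.span R (Set.range fun i => (b i : M)) = P := by
  rw [← Function.comp_def, Set.range_comp, ← Submodule.coe_subtype, Submodule.span_image,
    b.span_eq, Submodule.map_subtype_top]

section RatMat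

variable {m n o : Type*}

theorem ratMat_mul [Fintype n] (A : Matrix m n K[X]) (B : Matrix n o K[X]) :
    ratMat (A * B) = ratMat A * ratMat B :=
  Matrix.map_mul

theorem ratMat_injective : Function.Injective (ratMat (K := K) (m := m) (n := n)) :=
  Matrix.map_injective (IsFractionRing.injective K[X] (RatFunc K))

theorem det_ratMat [Fintype m] [DecidableEq m] (A : Matrix m m K[X]) :
    (ratMat A).det = algebraMap K[X] (RatFunc K) A.det :=
  ((algebraMap K[X] (RatFunc K)).map_det A).symm

theorem rows_mem_PH_iff [Fintype n] (A : Matrix m n K[X]) (H : Matrix n o (RatFunc K)) :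
    (∀ i, A i ∈ PH H) ↔ ∃ B : Matrix m o K[X], ratMat A * H = ratMat B := by
  simp only [PH, Submodule.mem_mk, AddSubmonoid.mem_mk, AddSubsemigroup.mem_mk, Set.mem_ofPred_eq,
    Set.mem_range]
  constructor
  · intro h
    choose B hB using h
    exact ⟨Matrix.of B, by ext i j; simp [ratMat, Matrix.mul_apply, hB]⟩
  · rintro ⟨B, hB⟩ i j
    exact ⟨B i j, by simpa [ratMat, Matrix.mul_apply] using (congrFun₂ hB i j).symm⟩

end RatMat

section MatrixFraction

variable {p n : Type*} [Fintype p] [DecidableEq p] {H : Matrix p n (RatFunc K)}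
  {S : Matrix p p K[X]} {N : Matrix p n K[X]}

theorem span_rows_eq_PH_of_leftCoprime (hS : S.det ≠ 0) (hfrac : ratMat S * H = ratMat N)
    (hcop : LeftCoprime S N) : Submodule.span K[X] (Set.range fun i => S i) = PH H := by
  have hSrows : ∀ i, S i ∈ PH H := (rows_mem_PH_iff S H).2 ⟨N, hfrac⟩
  obtain ⟨b⟩ := (PH H).nonempty_basis_of_linearIndependent
    (Matrix.linearIndependent_rows_of_det_ne_zero hS) hSrows
  set T : Matrix p p K[X] := fun i => (b i : p → K[X])
  have hT : Submodule.span K[X] (Set.range fun i => T i) = PH H := b.span_range_subtype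
  have hSPH : Submodule.span K[X] (Set.range fun i => S i) ≤ PH H :=
    Submodule.span_le.2 (Set.range_subset_iff.2 hSrows)
  obtain ⟨W, hSWT⟩ := (Matrix.span_rows_le_span_rows_iff_exists_eq_mul S T).1 (hT ▸ hSPH)
  obtain ⟨N₀, hTN₀⟩ := (rows_mem_PH_iff T H).1 fun i => b i |>.2
  have hNWN₀ : N = W * N₀ := ratMat_injective <| by
    rw [ratMat_mul, ← hTN₀, ← Matrix.mul_assoc, ← ratMat_mul, ← hSWT, hfrac]
  have hW : IsUnit W.det :=
    hcop W (fun h => hS (by rw [hSWT, det_mul, h, zero_mul])) ⟨T, hSWT⟩ ⟨N₀, hNWN₀⟩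
  have hTS : T = W⁻¹ * S := by
    rw [hSWT, ← Matrix.mul_assoc, nonsing_inv_mul _ hW, Matrix.one_mul]
  exact hSPH.antisymm (hT ▸ (Matrix.span_rows_le_span_rows_iff_exists_eq_mul T S).2 ⟨_, hTS⟩)

theorem leftCoprime_of_span_rows_eq_PH (hS : S.det ≠ 0) (hfrac : ratMat S * H = ratMat N)
    (hspan : Submodule.span K[X] (Set.range fun i => S i) = PH H) : LeftCoprime S N := by
  intro U hU hUS hUN
  obtain ⟨S', rfl⟩ := hUS
  -- without the ascription `N'` is elaborated as a `CStarMatrix`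
  obtain ⟨N', rfl⟩ : ∃ N' : Matrix p n K[X], N = U * N' := hUN
  have hU' : IsUnit (ratMat U).det := by
    rw [det_ratMat, isUnit_iff_ne_zero, ne_eq,
      map_eq_zero_iff _ (IsFractionRing.injective K[X] (RatFunc K))]
    exact hU
  have hS'N' : ratMat S' * H = ratMat N' := by
    have h : ratMat U * (ratMat S' * H) = ratMat U * ratMat N' := by
      rw [← Matrix.mul_assoc, ← ratMat_mul, hfrac, ratMat_mul]
    simpa only [nonsing_inv_mul_cancel_left _ _ hU'] using congrArg ((ratMat U)⁻¹ * ·) h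
  obtain ⟨V, hS'⟩ := (Matrix.span_rows_le_span_rows_iff_exists_eq_mul S' (U * S')).1 <| by
    rw [hspan, Submodule.span_le, Set.range_subset_iff]
    exact (rows_mem_PH_iff S' H).2 ⟨N', hS'N'⟩
  have hVU : V.det * U.det = 1 := by
    refine mul_right_cancel₀ (b := S'.det) (right_ne_zero_of_mul (det_mul U S' ▸ hS)) ?_
    conv_rhs => rw [hS']
    rw [det_mul, det_mul, one_mul, mul_assoc]
  exact IsUnit.of_mul_eq_one_right _ hVU

end MatrixFraction

/-- `S⁻¹N = H` is a coprime left matrix fraction description of `H`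
iff the rows of `S` form a basis of the module `P_H` of polynomial row vectors `u`
with `u H` polynomial. -/
theorem coprime_iff_denominator_basis
    {p n : ℕ} (H : Matrix (Fin p) (Fin n) (RatFunc K))
    (S : Matrix (Fin p) (Fin p) (Polynomial K))
    (N : Matrix (Fin p) (Fin n) (Polynomial K))
    (hS : S.det ≠ 0) (hfrac : ratMat S * H = ratMat N) :
    LeftCoprime S N ↔
      (LinearIndependent (Polynomial K) (fun i => S i) ∧
        Submodule.span (Polynomial K) (Set.range fun i => S i) = PH H) :=
  ⟨fun hcop => ⟨linearIndependent_rows_of_det_ne_zero hS,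
      span_rows_eq_PH_of_leftCoprime hS hfrac hcop⟩,
    fun h => leftCoprime_of_span_rows_eq_PH hS hfrac h.2⟩

end PolyNull
end

section
/- Let K be a sufficiently large field and M ∈ K[x]^{(n+p)×n} of rank n. Then there exists a constant matrix Q ∈ K^{(n+p)×(n+p)} such that the McMillan degree of the top n×n submatrix of QM equals the McMillan degree of QM (which equals that of M). Furthermore, for such a Q, if N ∈ K[x]^{p×(n+p)} is a minimal basis of the left nullspace module of QM, then the submatrix S = N_{·, n+1..n+p} ∈ K[x]^{p×p} formed by the last p columns of N is row-reduced, with row degrees equal to the Kronecker indices δ₁, …, δ_p of QM. -/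
/-!
Since `M` has full column rank, some `n × n` minor is nonzero; one of maximal degree realises
the McMillan degree, and the permutation matrix `Q` moving its rows to the top leaves the
McMillan degree unchanged. For a left kernel vector `(u, w)` of `QM = [T; B]`, Cramer's rule
gives `det T • u = -w B adj T`, whose entries are combinations of the `w i` with `n × n` minors
as coefficients; as `det T` has maximal degree, `deg u ≤ deg w`, so the degree of a kernel
vector is that of its last `p` entries. If the leading row coefficient matrix of the last `p`
columns of a minimal basis had a nonzero left kernel vector `c`, combining the rows with the
coefficients `c i` shifted by powers of `x` would cancel the top coefficients and produce a
kernel vector of lower degree that can replace a row of the basis, contradicting minimality.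
-/

open Polynomial Matrix

namespace PolyNull

variable {K : Type*} [Field K]

theorem _root_.Matrix.vecMul_adjugate_apply {R n : Type*} [CommRing R] [Fintype n] [DecidableEq n]
    (T : Matrix n n R) (b : n → R) (j : n) :
    (b ᵥ* adjugate T) j = (T.updateRow j b).det := by
  rw [← transpose_transpose (adjugate T), vecMul_transpose, adjugate_transpose,
    ← cramer_eq_adjugate_mulVec, cramer_apply, updateCol_transpose, det_transpose]

theorem _root_.Matrix.det_mul_apply_inl_of_vecMul_eq_zero {R m n : Type*} [CommRing R]
    [Fintype m] [Fintype n] [DecidableEq n] {A : Matrix (n ⊕ m) n R} {v : n ⊕ m → R}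
    (hv : v ᵥ* A = 0) (j : n) :
    (A.submatrix Sum.inl id).det * v (Sum.inl j)
      = -∑ i, v (Sum.inr i) * ((A.submatrix Sum.inl id).updateRow j (A (Sum.inr i))).det := by
  set T := A.submatrix Sum.inl id
  have hsplit : (v ∘ Sum.inl) ᵥ* T = -((v ∘ Sum.inr) ᵥ* A.toRows₂) := by
    rw [← fromRows_toRows A, vecMul_fromRows] at hv
    exact eq_neg_of_add_eq_zero_left hv
  -- multiply on the right by `adjugate T`, then read off the `j`-th entry by Cramer's rule
  have h := congrFun (congrArg (· ᵥ* adjugate T) hsplit) j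
  simp only [vecMul_vecMul, mul_adjugate, vecMul_smul, vecMul_one, neg_vecMul] at h
  rw [Pi.smul_apply, smul_eq_mul, Function.comp_apply] at h
  rw [h, Pi.neg_apply, vecMul, dotProduct]
  congr 1
  refine Finset.sum_congr rfl fun i _ => ?_
  rw [Function.comp_apply, ← vecMul_adjugate_apply]
  rfl

theorem _root_.Matrix.updateRow_submatrix_inl {R m n : Type*} [DecidableEq n]
    (A : Matrix (n ⊕ m) n R) (j : n) (i : m) :
    (A.submatrix Sum.inl id).updateRow j (A (Sum.inr i))
      = A.submatrix (Function.update Sum.inl j (Sum.inr i)) id := by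
  ext k l
  by_cases hk : k = j
  · subst hk; simp
  · simp [hk]

theorem _root_.Function.injective_update_inl_inr {m n : Type*} [DecidableEq n] (j : n) (i : m) :
    Function.Injective (Function.update (Sum.inl : n → n ⊕ m) j (Sum.inr i)) := by
  intro k l hkl
  by_cases hk : k = j <;> by_cases hl : l = j <;> simp_all

theorem _root_.Matrix.injective_of_det_submatrix_ne_zero {R m n : Type*} [CommRing R]
    [Fintype n] [DecidableEq n] {A : Matrix m n R} {f : n → m}
    (h : (A.submatrix f id).det ≠ 0) :
    Function.Injective f := by
  intro i j hij
  by_contra hne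
  exact h (det_zero_of_row_eq hne (by ext; simp [hij]))

theorem _root_.Matrix.exists_det_submatrix_ne_zero_of_rank_eq {F m n : Type*} [Field F]
    [Fintype m] [Fintype n] [DecidableEq n] (A : Matrix m n F) (hA : A.rank = Fintype.card n) :
    ∃ f : n → m, (A.submatrix f id).det ≠ 0 := by
  obtain ⟨κ, a, ha, hspan, hli⟩ := exists_linearIndependent' F A.row
  have : Fintype κ := @Fintype.ofFinite κ (Finite.of_injective a ha)
  have hcard : Fintype.card n = Fintype.card κ := by
    rw [← hA, rank_eq_finrank_span_row, ← hspan, finrank_span_eq_card hli]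
  let e := Fintype.equivOfCardEq hcard
  have hrows : LinearIndependent F (A.submatrix (a ∘ e) id).row := hli.comp e e.injective
  exact ⟨a ∘ e,
    ((isUnit_iff_isUnit_det _).mp (linearIndependent_rows_iff_isUnit.mp hrows)).ne_zero⟩

theorem _root_.Function.Injective.exists_perm_comp_eq {α β : Type*} [Finite β] {g f : α → β}
    (hg : Function.Injective g) (hf : Function.Injective f) :
    ∃ σ : Equiv.Perm β, ∀ a, σ (g a) = f a := by
  classical
  let e := (Equiv.ofInjective g hg).symm.trans (Equiv.ofInjective f hf)
  refine ⟨e.extendSubtype, fun a => ?_⟩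
  rw [Equiv.extendSubtype_apply_of_mem e _ ⟨a, rfl⟩]
  simp [e, Equiv.ofInjective_symm_apply]

section UpdateSum

variable {R M ι : Type*} [CommRing R] [AddCommGroup M] [Module R M] [Fintype ι] [DecidableEq ι]
  {f : ι → M} (e : ι → R) {i : ι}

theorem _root_.LinearIndependent.update_sum (hf : LinearIndependent R f) (hi : IsUnit (e i)) :
    LinearIndependent R (Function.update f i (∑ k, e k • f k)) :=
  hf.update i _ ⟨1, one_mem _, Finsupp.equivFunOnFinite.symm e, hi.mem_nonZeroDivisors, by
    simp [Finsupp.linearCombination_apply, Finsupp.sum_fintype]⟩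

theorem _root_.Submodule.span_range_update_sum (hi : IsUnit (e i)) :
    Submodule.span R (Set.range (Function.update f i (∑ k, e k • f k)))
      = Submodule.span R (Set.range f) := by
  set f' := Function.update f i (∑ k, e k • f k)
  have hmem : ∀ k, k ≠ i → f k ∈ Submodule.span R (Set.range f') := fun k hk =>
    Submodule.subset_span ⟨k, Function.update_of_ne hk _ _⟩
  apply le_antisymm
  · refine Submodule.span_le.mpr (Set.range_subset_iff.mpr fun k => ?_)
    by_cases hk : k = i
    · subst hk
      simpa [f'] using Submodule.sum_mem _ fun k _ => Submodule.smul_mem _ (e k)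
        (Submodule.subset_span (Set.mem_range_self k))
    · simpa [f', hk] using Submodule.subset_span (Set.mem_range_self k)
  · refine Submodule.span_le.mpr (Set.range_subset_iff.mpr fun k => ?_)
    by_cases hk : k = i
    · subst hk
      have hsplit : e k • f k = f' k - ∑ l ∈ Finset.univ.erase k, e l • f l := by
        rw [eq_sub_iff_add_eq, Finset.add_sum_erase _ (fun l => e l • f l) (Finset.mem_univ k)]
        exact (Function.update_self k _ f).symm
      refine (Submodule.smul_mem_iff_of_isUnit _ hi).mp ?_
      rw [hsplit]
      exact Submodule.sub_mem _ (Submodule.subset_span (Set.mem_range_self k))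
        (Submodule.sum_mem _ fun l hl =>
          Submodule.smul_mem _ _ (hmem l (Finset.ne_of_mem_erase hl)))
    · exact hmem k hk

end UpdateSum

lemma le_vecDeg {m : Type*} [Fintype m] (v : m → K[X]) (i : m) :
    (v i).natDegree ≤ vecDeg v :=
  Finset.le_sup (f := fun i => (v i).natDegree) (Finset.mem_univ i)

lemma vecDeg_le {m : Type*} [Fintype m] {v : m → K[X]} {d : ℕ}
    (h : ∀ i, (v i).natDegree ≤ d) : vecDeg v ≤ d :=
  Finset.sup_le fun i _ => h i

lemma vecDeg_lt_of_degree_lt {m : Type*} [Fintype m] {v : m → K[X]} (hv : v ≠ 0) {d : ℕ}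
    (h : ∀ i, (v i).degree < d) : vecDeg v < d := by
  obtain ⟨i, hi⟩ := Function.ne_iff.mp hv
  have hd : 0 < d := lt_of_le_of_lt (Nat.zero_le _) ((natDegree_lt_iff_degree_lt hi).mpr (h i))
  refine (Finset.sup_lt_iff hd).mpr fun k _ => ?_
  by_cases hk : v k = 0
  · simpa [hk] using hd
  · exact (natDegree_lt_iff_degree_lt hk).mpr (h k)

lemma degree_sum_C_mul_X_pow_mul_lt {ι n : Type*} [Fintype ι] [Fintype n] (S : Matrix ι n K[X])
    {c : ι → K} (hc : c ᵥ* leadingRowMatrix S = 0) {D : ℕ}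
    (hD : ∀ i, c i ≠ 0 → vecDeg (S i) ≤ D) (j : n) :
    (∑ i, C (c i) * X ^ (D - vecDeg (S i)) * S i j).degree < (D : WithBot ℕ) := by
  have hterm : ∀ i, c i ≠ 0 → (C (c i) * X ^ (D - vecDeg (S i)) * S i j).natDegree ≤ D ∧
      (C (c i) * X ^ (D - vecDeg (S i)) * S i j).coeff D = c i * leadingRowMatrix S i j := by
    intro i hi
    refine ⟨natDegree_mul_le.trans ?_, ?_⟩
    · have := natDegree_C_mul_X_pow_le (c i) (D - vecDeg (S i))
      have := le_vecDeg (S i) j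
      have := hD i hi
      omega
    · rw [mul_assoc, coeff_C_mul, coeff_X_pow_mul', if_pos (Nat.sub_le _ _),
        Nat.sub_sub_self (hD i hi)]
      rfl
  have hdeg : (∑ i, C (c i) * X ^ (D - vecDeg (S i)) * S i j).natDegree ≤ D := by
    refine natDegree_sum_le_of_forall_le _ _ fun i _ => ?_
    by_cases hi : c i = 0
    · simp [hi]
    · exact (hterm i hi).1
  have hcoeff : (∑ i, C (c i) * X ^ (D - vecDeg (S i)) * S i j).coeff D = 0 := by
    have hcj : ∑ i, c i * leadingRowMatrix S i j = 0 := by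
      simpa [vecMul, dotProduct] using congrFun hc j
    rw [finsetSum_coeff, ← hcj]
    refine Finset.sum_congr rfl fun i _ => ?_
    by_cases hi : c i = 0
    · simp [hi]
    · exact (hterm i hi).2
  rw [degree_lt_iff_coeff_zero]
  intro k hk
  rcases hk.eq_or_lt with rfl | hk
  · exact hcoeff
  · exact coeff_eq_zero_of_natDegree_lt (hdeg.trans_lt hk)

lemma natDegree_sign_mul {R n : Type*} [Ring R] [Fintype n] [DecidableEq n] (σ : Equiv.Perm n)
    (q : R[X]) : (((Equiv.Perm.sign σ : ℤ) : R[X]) * q).natDegree = q.natDegree := by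
  rcases Int.units_eq_one_or (Equiv.Perm.sign σ) with h | h <;> simp [h]

lemma exists_det_submatrix_ne_zero_of_polyRank_eq {m n : Type*} [Fintype m] [Fintype n]
    [DecidableEq n] (M : Matrix m n K[X]) (hM : polyRank M = Fintype.card n) :
    ∃ f : n → m, (M.submatrix f id).det ≠ 0 := by
  obtain ⟨f, hf⟩ := (ratMat M).exists_det_submatrix_ne_zero_of_rank_eq hM
  refine ⟨f, fun h => hf ?_⟩
  rw [ratMat, submatrix_map, ← RingHom.mapMatrix_apply, ← RingHom.map_det, h, map_zero]

structure IsMaximalMinor {m n : Type*} [Fintype n] [DecidableEq n] (M : Matrix m n K[X])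
    (f : n → m) : Prop where
  det_ne_zero : (M.submatrix f id).det ≠ 0
  natDegree_det_le : ∀ g : n → m, Function.Injective g →
    (M.submatrix g id).det.natDegree ≤ (M.submatrix f id).det.natDegree

namespace IsMaximalMinor

variable {m n : Type*} [Fintype n] [DecidableEq n] {M : Matrix m n K[X]} {f : n → m}

lemma injective (h : IsMaximalMinor M f) : Function.Injective f :=
  injective_of_det_submatrix_ne_zero h.det_ne_zero

lemma exists_of_det_ne_zero [Fintype m] {f₀ : n → m} (h₀ : (M.submatrix f₀ id).det ≠ 0) :
    ∃ f, IsMaximalMinor M f := by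
  classical
  obtain ⟨f, hf, hmax⟩ := Finset.exists_max_image
    (Finset.univ.filter fun g : n → m => (M.submatrix g id).det ≠ 0)
    (fun g => (M.submatrix g id).det.natDegree) ⟨f₀, by simpa using h₀⟩
  refine ⟨f, (Finset.mem_filter.mp hf).2, fun g _ => ?_⟩
  by_cases hg : (M.submatrix g id).det = 0
  · simp [hg]
  · exact hmax g (by simpa using hg)

lemma submatrix_perm (h : IsMaximalMinor M f) {σ : Equiv.Perm m} {g : n → m}
    (hσ : ∀ k, σ (g k) = f k) : IsMaximalMinor (M.submatrix σ id) g := by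
  have hsub : (M.submatrix σ id).submatrix g id = M.submatrix f id := by
    ext k l; simp [hσ]
  refine ⟨hsub ▸ h.det_ne_zero, fun g' hg' => ?_⟩
  rw [hsub, submatrix_submatrix]
  exact h.natDegree_det_le _ (σ.injective.comp hg')

end IsMaximalMinor

lemma natDegree_det_submatrix_of_injective {m : Type*} {r : ℕ} (M : Matrix m (Fin r) K[X])
    (f : Fin r → m) {g : Fin r → Fin r} (hg : Function.Injective g) :
    (M.submatrix f g).det.natDegree = (M.submatrix f id).det.natDegree := by
  let σ := Equiv.ofBijective g (Finite.injective_iff_bijective.mp hg)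
  have : M.submatrix f g = (M.submatrix f id).submatrix id σ := rfl
  rw [this, det_permute', natDegree_sign_mul]

open scoped Classical in
lemma mcMillanDeg_eq_of_forall_le {m : Type*} [Fintype m] {r : ℕ} (M : Matrix m (Fin r) K[X])
    {f : Fin r → m} (hf : Function.Injective f)
    (hmax : ∀ g : Fin r → m, Function.Injective g →
      (M.submatrix g id).det.natDegree ≤ (M.submatrix f id).det.natDegree) :
    mcMillanDeg M r = (M.submatrix f id).det.natDegree := by
  unfold mcMillanDeg
  refine le_antisymm (Finset.sup_le fun fg _ => ?_) ?_
  · split_ifs with hfg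
    · rw [natDegree_det_submatrix_of_injective M fg.1 hfg.2]
      exact hmax fg.1 hfg.1
    · exact Nat.zero_le _
  · refine le_trans ?_ (Finset.le_sup (Finset.mem_univ (f, id)))
    rw [if_pos ⟨hf, Function.injective_id⟩]

lemma IsMaximalMinor.mcMillanDeg_eq {m : Type*} [Fintype m] {r : ℕ} {M : Matrix m (Fin r) K[X]}
    {f : Fin r → m} (h : IsMaximalMinor M f) :
    mcMillanDeg M r = (M.submatrix f id).det.natDegree :=
  mcMillanDeg_eq_of_forall_le M h.injective h.natDegree_det_le

lemma mcMillanDeg_square {r : ℕ} (T : Matrix (Fin r) (Fin r) K[X]) :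
    mcMillanDeg T r = T.det.natDegree := by
  rw [mcMillanDeg_eq_of_forall_le T Function.injective_id fun g hg => ?_, submatrix_id_id]
  let σ := Equiv.ofBijective g (Finite.injective_iff_bijective.mp hg)
  have : T.submatrix g id = T.submatrix σ id := rfl
  rw [this, det_permute, natDegree_sign_mul, submatrix_id_id]

section NullBasis

variable {m n ι : Type*} [Fintype m] {M : Matrix m n K[X]} {N : ι → (m → K[X])}

lemma IsNullBasis.mem (hN : IsNullBasis M N) (i : ι) : N i ∈ leftNullMod M :=
  hN.2 ▸ Submodule.subset_span ⟨i, rfl⟩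

lemma IsNullBasis.update_sum [Fintype ι] [DecidableEq ι] (hN : IsNullBasis M N) (e : ι → K[X])
    {i : ι} (hi : IsUnit (e i)) :
    IsNullBasis M (Function.update N i (∑ k, e k • N k)) :=
  ⟨hN.1.update_sum e hi, (Submodule.span_range_update_sum e hi).trans hN.2⟩

lemma IsMinimalNullBasis.vecDeg_le_of_update [Fintype ι] [DecidableEq ι]
    (hN : IsMinimalNullBasis M N) {i : ι} {v : m → K[X]}
    (hv : IsNullBasis M (Function.update N i v)) : vecDeg (N i) ≤ vecDeg v := by
  by_contra! hlt
  have hcount := hN.2 _ hv (vecDeg v)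
  have hfilter : Finset.univ.filter (fun k => vecDeg (Function.update N i v k) ≤ vecDeg v)
      = insert i (Finset.univ.filter fun k => vecDeg (N k) ≤ vecDeg v) := by
    ext k
    by_cases hk : k = i
    · subst hk; simp
    · simp [hk]
  rw [hfilter, Finset.card_insert_of_notMem (by simpa using hlt)] at hcount
  omega

end NullBasis

variable {m n : Type*} [Fintype m] [Fintype n] [DecidableEq n]

namespace IsMaximalMinor

variable {A : Matrix (n ⊕ m) n K[X]} {v : n ⊕ m → K[X]}

lemma natDegree_inl_le (h : IsMaximalMinor A Sum.inl) (hv : v ∈ leftNullMod A) (j : n) :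
    (v (Sum.inl j)).natDegree ≤ vecDeg (v ∘ Sum.inr) := by
  by_cases hz : v (Sum.inl j) = 0
  · simp [hz]
  have hsum : ((A.submatrix Sum.inl id).det * v (Sum.inl j)).natDegree
      ≤ vecDeg (v ∘ Sum.inr) + (A.submatrix Sum.inl id).det.natDegree := by
    rw [det_mul_apply_inl_of_vecMul_eq_zero hv, natDegree_neg]
    refine natDegree_sum_le_of_forall_le _ _ fun i _ => natDegree_mul_le.trans ?_
    rw [updateRow_submatrix_inl]
    exact add_le_add (le_vecDeg (v ∘ Sum.inr) i)
      (h.natDegree_det_le _ (Function.injective_update_inl_inr j i))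
  rw [natDegree_mul h.det_ne_zero hz] at hsum
  omega

lemma vecDeg_comp_inr (h : IsMaximalMinor A Sum.inl) (hv : v ∈ leftNullMod A) :
    vecDeg (v ∘ Sum.inr) = vecDeg v := by
  refine le_antisymm (vecDeg_le fun i => le_vecDeg v (Sum.inr i)) (vecDeg_le ?_)
  rintro (j | i)
  · exact h.natDegree_inl_le hv j
  · exact le_vecDeg (v ∘ Sum.inr) i

lemma eq_zero_of_comp_inr_eq_zero (h : IsMaximalMinor A Sum.inl) (hv : v ∈ leftNullMod A)
    (hw : v ∘ Sum.inr = 0) : v = 0 := by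
  funext s
  rcases s with j | i
  · have hdet := det_mul_apply_inl_of_vecMul_eq_zero hv j
    simp only [show ∀ i, v (Sum.inr i) = 0 from congrFun hw, zero_mul, Finset.sum_const_zero,
      neg_zero, mul_eq_zero, h.det_ne_zero, false_or] at hdet
    exact hdet
  · exact congrFun hw i

end IsMaximalMinor

theorem IsMaximalMinor.isRowReduced_of_isMinimalNullBasis {A : Matrix (n ⊕ m) n K[X]}
    (h : IsMaximalMinor A Sum.inl) {ι : Type*} [Fintype ι] {N : ι → (n ⊕ m → K[X])}
    (hN : IsMinimalNullBasis A N) : IsRowReduced (Matrix.of fun i j => N i (Sum.inr j)) := by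
  classical
  set S : Matrix ι m K[X] := Matrix.of fun i j => N i (Sum.inr j)
  refine LinearIndependent.rank_matrix (Fintype.linearIndependent_iff.mpr fun c hc => ?_)
  by_contra! hne
  have hc' : c ᵥ* leadingRowMatrix S = 0 := by rw [vecMul_eq_sum]; exact hc
  obtain ⟨i₀, hi₀, hmax⟩ := Finset.exists_max_image (Finset.univ.filter (c · ≠ 0))
    (fun i => vecDeg (S i)) (by simpa [Finset.Nonempty] using hne)
  -- replacing row `i₀` by `v` keeps a basis but lowers its degree, against minimality
  set D := vecDeg (S i₀)
  set e : ι → K[X] := fun i => C (c i) * X ^ (D - vecDeg (S i))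
  set v := ∑ i, e i • N i
  have hvmem : v ∈ leftNullMod A :=
    Submodule.sum_mem _ fun i _ => Submodule.smul_mem _ _ (hN.1.mem i)
  have he₀ : IsUnit (e i₀) := by
    simpa [e, D] using (Finset.mem_filter.mp hi₀).2
  have hinr : ∀ j, (v (Sum.inr j)).degree < D := by
    intro j
    convert degree_sum_C_mul_X_pow_mul_lt S hc' (fun i hi => hmax i (by simpa using hi)) j
    simp [v, e, S, Finset.sum_apply]
  have hinr_ne : v ∘ Sum.inr ≠ 0 := fun hw =>
    he₀.ne_zero (Fintype.linearIndependent_iff.mp hN.1.1 e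
      (h.eq_zero_of_comp_inr_eq_zero hvmem hw) i₀)
  have hlt : vecDeg v < vecDeg (N i₀) := by
    rw [← h.vecDeg_comp_inr hvmem, ← h.vecDeg_comp_inr (hN.1.mem i₀)]
    exact vecDeg_lt_of_degree_lt hinr_ne hinr
  exact (hN.vecDeg_le_of_update (hN.1.update_sum e he₀)).not_gt hlt

theorem exists_conditioning_matrix_general
    {n p : ℕ}
    (M : Matrix (Fin n ⊕ Fin p) (Fin n) (Polynomial K))
    (hrank : polyRank M = n) :
    ∃ Q : Matrix (Fin n ⊕ Fin p) (Fin n ⊕ Fin p) K,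
      mcMillanDeg ((Q.map Polynomial.C * M).submatrix (Sum.inl : Fin n → Fin n ⊕ Fin p) id) n
          = mcMillanDeg (Q.map Polynomial.C * M) n ∧
      mcMillanDeg (Q.map Polynomial.C * M) n = mcMillanDeg M n ∧
      ∀ N : Fin p → (Fin n ⊕ Fin p → Polynomial K),
        IsMinimalNullBasis (Q.map Polynomial.C * M) N →
          IsRowReduced (Matrix.of fun i j => N i (Sum.inr j)) ∧
          ∀ i, vecDeg (fun j => N i (Sum.inr j)) = vecDeg (N i) := by
  obtain ⟨f₀, hf₀⟩ := exists_det_submatrix_ne_zero_of_polyRank_eq M (by simpa using hrank)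
  obtain ⟨f, hf⟩ := IsMaximalMinor.exists_of_det_ne_zero hf₀
  obtain ⟨σ, hσ⟩ := Sum.inl_injective.exists_perm_comp_eq hf.injective
  have hA : IsMaximalMinor (M.submatrix σ id) Sum.inl := hf.submatrix_perm hσ
  refine ⟨σ.toPEquiv.toMatrix, ?_⟩
  rw [PEquiv.map_toMatrix, PEquiv.toMatrix_toPEquiv_mul]
  refine ⟨by rw [mcMillanDeg_square, hA.mcMillanDeg_eq], ?_, fun N hN =>
    ⟨hA.isRowReduced_of_isMinimalNullBasis hN, fun i => hA.vecDeg_comp_inr (hN.1.mem i)⟩⟩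
  rw [hA.mcMillanDeg_eq, hf.mcMillanDeg_eq, submatrix_submatrix]
  congr 3
  exact funext hσ

/-- There is a constant matrix `Q` such that the McMillan degree of the
top `n × n` submatrix of `Q M` equals that of `Q M` (and of `M`); for such a `Q`, the
last `p` columns of any minimal basis of the left nullspace module of `Q M` form a
row-reduced matrix whose row degrees are the Kronecker indices of `Q M`. -/
theorem exists_conditioning_matrix
    {n p : ℕ} [Infinite K]
    (M : Matrix (Fin n ⊕ Fin p) (Fin n) (Polynomial K))
    (hrank : polyRank M = n) :
    ∃ Q : Matrix (Fin n ⊕ Fin p) (Fin n ⊕ Fin p) K,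
      mcMillanDeg ((Q.map Polynomial.C * M).submatrix (Sum.inl : Fin n → Fin n ⊕ Fin p) id) n
          = mcMillanDeg (Q.map Polynomial.C * M) n ∧
      mcMillanDeg (Q.map Polynomial.C * M) n = mcMillanDeg M n ∧
      ∀ N : Fin p → (Fin n ⊕ Fin p → Polynomial K),
        IsMinimalNullBasis (Q.map Polynomial.C * M) N →
          IsRowReduced (Matrix.of fun i j => N i (Sum.inr j)) ∧
          ∀ i, vecDeg (fun j => N i (Sum.inr j)) = vecDeg (N i) :=
  exists_conditioning_matrix_general M hrank

end PolyNull
end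

section
/- Let K be a field and M ∈ K[x]^{m×n} of degree d and rank r, with Kronecker indices δ₁ ≤ … ≤ δ_{m−r}. Then δ₁ + δ₂ + … + δ_{m−r} ≤ r·d. In particular, M admits a basis of its left nullspace module consisting of m−r polynomial vectors whose degree sum is at most r·d. -/
open Polynomial Matrix

/-!
Cancelling leading coefficients lowers the degree sum of a basis of the left nullspace module
that is not row reduced, so the module has a row-reduced basis `B`. Its leading row coefficient
matrix has a nonzero `k × k` minor on some columns `c`, hence the minor `B_c` of `B` itself has
degree at least the degree sum of `B`. The nullspace is a direct summand of `K[x]^m` (the quotient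
embeds in the free module `K[x]^n`), so `B` extends to a unimodular matrix `V = [B; W]`. Pick `r`
columns `g` of `M` spanning its column space over `K(x)` and let `U = [e_c | M_g]`. Since
`B M = 0`, `V U` is block lower triangular with diagonal blocks `B_c` and `W M_g`, so
`det B_c ∣ det U`. Now `det U ≠ 0`, and only the `r` columns taken from `M` contribute degree,
so `deg det U ≤ r d`. Finally, a minimal basis has degree sum at most that of `B`.
-/

namespace Finset

theorem sum_eq_sum_range_card_filter_lt {ι : Type*} (s : Finset ι) (a : ι → ℕ) {T : ℕ}
    (h : ∀ i ∈ s, a i ≤ T) :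
    ∑ i ∈ s, a i = ∑ t ∈ range T, (s.filter fun i => t < a i).card := by
  simp only [card_filter]
  rw [sum_comm]
  refine sum_congr rfl fun i hi => ?_
  rw [← card_filter, range_eq_Ico, Ico_filter_lt, min_eq_right (h i hi), Nat.card_Ico,
    Nat.sub_zero]

theorem sum_le_sum_of_card_filter_le {ι : Type*} [Fintype ι] (a b : ι → ℕ)
    (h : ∀ t, (univ.filter fun i => b i ≤ t).card ≤ (univ.filter fun i => a i ≤ t).card) :
    ∑ i, a i ≤ ∑ i, b i := by
  set T := ∑ j, (a j + b j)
  have hT : ∀ i, a i + b i ≤ T := fun i =>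
    single_le_sum (f := fun j => a j + b j) (fun j _ => Nat.zero_le _) (mem_univ i)
  have hcompl : ∀ (c : ι → ℕ) (t : ℕ),
      (univ.filter fun i => t < c i).card + (univ.filter fun i => c i ≤ t).card
        = Fintype.card ι := fun c t => by
    rw [add_comm]
    simpa only [not_le, card_univ] using card_filter_add_card_filter_not (s := univ) (c · ≤ t)
  rw [sum_eq_sum_range_card_filter_lt _ _ fun i _ => (Nat.le_add_right _ _).trans (hT i),
    sum_eq_sum_range_card_filter_lt _ _ fun i _ => (Nat.le_add_left _ _).trans (hT i)]
  refine sum_le_sum fun t _ => ?_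
  have := hcompl a t
  have := hcompl b t
  have := h t
  omega

end Finset

namespace Polynomial

variable {R : Type*} [CommRing R]

theorem natDegree_C_mul_X_pow_sub_mul_le {p : R[X]} {d D : ℕ} (hp : p.natDegree ≤ d)
    (hdD : d ≤ D) (a : R) : (C a * X ^ (D - d) * p).natDegree ≤ D :=
  (natDegree_mul_le.trans (add_le_add (natDegree_C_mul_X_pow_le a _) hp)).trans
    (Nat.sub_add_cancel hdD).le

theorem coeff_C_mul_X_pow_sub_mul {d D : ℕ} (hdD : d ≤ D) (a : R) (p : R[X]) :
    (C a * X ^ (D - d) * p).coeff D = a * p.coeff d := by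
  rw [mul_assoc, coeff_C_mul, coeff_X_pow_mul', if_pos (Nat.sub_le _ _), Nat.sub_sub_self hdD]

theorem coeff_prod_sum_of_natDegree_le {ι : Type*} (s : Finset ι) (f : ι → R[X])
    (d : ι → ℕ) (h : ∀ i ∈ s, (f i).natDegree ≤ d i) :
    (∏ i ∈ s, f i).coeff (∑ i ∈ s, d i) = ∏ i ∈ s, (f i).coeff (d i) := by
  classical
  induction s using Finset.induction_on with
  | empty => simp
  | insert x s hx ih =>
    have hs : ∀ i ∈ s, (f i).natDegree ≤ d i := fun i hi => h i (Finset.mem_insert_of_mem hi)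
    rw [Finset.prod_insert hx, Finset.sum_insert hx, Finset.prod_insert hx,
      coeff_mul_add_eq_of_natDegree_le (h x (Finset.mem_insert_self x s))
        ((natDegree_prod_le s f).trans (Finset.sum_le_sum hs)), ih hs]

theorem natDegree_det_le_of_col {ι : Type*} [Fintype ι] [DecidableEq ι] (A : Matrix ι ι R[X])
    (c : ι → ℕ) (h : ∀ i j, (A i j).natDegree ≤ c j) :
    A.det.natDegree ≤ ∑ j, c j := by
  rw [det_apply]
  refine natDegree_sum_le_of_forall_le _ _ fun σ _ => ?_
  rw [Units.smul_def, zsmul_eq_mul]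
  refine natDegree_mul_le.trans ?_
  rw [natDegree_intCast, zero_add]
  exact (natDegree_prod_le _ _).trans (Finset.sum_le_sum fun j _ => h (σ j) j)

theorem coeff_det_sum_of_row {ι : Type*} [Fintype ι] [DecidableEq ι] (A : Matrix ι ι R[X])
    (d : ι → ℕ) (h : ∀ i j, (A i j).natDegree ≤ d i) :
    A.det.coeff (∑ i, d i) = (Matrix.of fun i j => (A i j).coeff (d i)).det := by
  rw [det_apply, det_apply, finsetSum_coeff]
  refine Finset.sum_congr rfl fun σ _ => ?_
  rw [Units.smul_def, Units.smul_def, coeff_smul, ← Equiv.sum_comp σ d,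
    coeff_prod_sum_of_natDegree_le _ _ _ fun i _ => h (σ i) i]
  rfl

end Polynomial

namespace Matrix

theorem vecMul_submatrix_id {α l m n : Type*} [NonUnitalNonAssocSemiring α] [Fintype m]
    (M : Matrix m n α) (v : m → α) (c : l → n) : v ᵥ* M.submatrix id c = (v ᵥ* M) ∘ c :=
  rfl

theorem mul_submatrix_id {α l m n o : Type*} [NonUnitalNonAssocSemiring α] [Fintype m]
    (A : Matrix l m α) (N : Matrix m n α) (c : o → n) :
    A * N.submatrix id c = (A * N).submatrix id c :=
  rfl

theorem det_updateRow_one {R ι : Type*} [CommRing R] [Fintype ι] [DecidableEq ι] (i : ι)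
    (q : ι → R) : ((1 : Matrix ι ι R).updateRow i q).det = q i := by
  simpa [← vecMul_eq_sum] using det_updateRow_sum (1 : Matrix ι ι R) i q

variable {F : Type*} [Field F] {m n : Type*} [Fintype n]

theorem exists_linearIndependent_cols_span_eq (A : Matrix m n F) :
    ∃ g : Fin A.rank → n, LinearIndependent F (A.col ∘ g) ∧
      Submodule.span F (Set.range (A.col ∘ g)) = Submodule.span F (Set.range A.col) := by
  obtain ⟨κ, a, ha, hspan, hli⟩ := exists_linearIndependent' F A.col
  have : Finite κ := Finite.of_injective a ha
  have : Fintype κ := Fintype.ofFinite κ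
  have hcard : Fintype.card κ = A.rank := by
    rw [rank_eq_finrank_span_cols, ← hspan, finrank_span_eq_card hli]
  let e : Fin A.rank ≃ κ := (Fintype.equivFinOfCardEq hcard).symm
  refine ⟨a ∘ e, hli.comp e e.injective, ?_⟩
  rw [← hspan, ← Function.comp_assoc, e.surjective.range_comp]

theorem exists_det_submatrix_ne_zero [Fintype m] [DecidableEq m] (A : Matrix m n F)
    (h : A.rank = Fintype.card m) : ∃ c : m → n, (A.submatrix id c).det ≠ 0 := by
  obtain ⟨g, hli, -⟩ := A.exists_linearIndependent_cols_span_eq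
  let e : m ≃ Fin A.rank := Fintype.equivFinOfCardEq h.symm
  refine ⟨g ∘ e, ((isUnit_iff_isUnit_det _).mp ?_).ne_zero⟩
  exact linearIndependent_cols_iff_isUnit.mp (hli.comp e e.injective)

theorem exists_cols_vecMul_eq_zero [Fintype m] (A : Matrix m n F) :
    ∃ g : Fin A.rank → n, ∀ v : m → F, (v ᵥ* A) ∘ g = 0 → v ᵥ* A = 0 := by
  obtain ⟨g, -, hspan⟩ := A.exists_linearIndependent_cols_span_eq
  refine ⟨g, fun v hv => funext fun j => ?_⟩
  have hle : Submodule.span F (Set.range (A.col ∘ g)) ≤ LinearMap.ker (dotProductBilin F F v) :=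
    Submodule.span_le.mpr (Set.range_subset_iff.mpr fun t => congrFun hv t)
  exact hle (hspan ▸ Submodule.subset_span ⟨j, rfl⟩)

end Matrix

namespace Module.Basis

theorem exists_extend_of_span_eq_ker {R : Type*} [CommRing R] [IsDomain R]
    [IsPrincipalIdealRing R] {ι m n : Type*} [Fintype ι] [Finite n]
    (φ : (m → R) →ₗ[R] (n → R)) {B : ι → m → R} (hli : LinearIndependent R B)
    (hspan : Submodule.span R (Set.range B) = LinearMap.ker φ) :
    ∃ (r : ℕ) (b : Basis (ι ⊕ Fin r) R (m → R)), ∀ i, b (Sum.inl i) = B i := by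
  classical
  let f := Fintype.linearCombination R B
  have hexact : Function.Exact f φ.rangeRestrict := by
    rw [LinearMap.exact_iff, LinearMap.ker_rangeRestrict, Fintype.range_linearCombination, hspan]
  obtain ⟨r, bR⟩ := Submodule.basisOfPid (Pi.basisFun R n) (LinearMap.range φ)
  have := Module.Projective.of_basis bR
  obtain ⟨s, hs⟩ := Module.projective_lifting_property φ.rangeRestrict LinearMap.id
    φ.surjective_rangeRestrict
  obtain ⟨e, hfe, -⟩ := hexact.splitSurjectiveEquiv
    (linearIndependent_iff_injective_fintypeLinearCombination.mp hli) ⟨s, hs⟩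
  refine ⟨r, ((Pi.basisFun R ι).prod bR).map e.symm, fun i => ?_⟩
  have hinl : (Pi.basisFun R ι).prod bR (Sum.inl i) = LinearMap.inl R _ _ (Pi.single i 1) := by
    ext <;> simp [prod_apply]
  rw [map_apply, hinl, ← LinearEquiv.coe_toLinearMap, ← LinearMap.comp_apply, ← hfe]
  simp [f, Fintype.linearCombination_apply_single]

theorem isUnit_det_of_equiv {R : Type*} [CommRing R] {κ m : Type*} [Fintype κ]
    [DecidableEq κ] [Fintype m] [DecidableEq m] (b : Basis κ R (m → R)) (e : κ ≃ m) :
    IsUnit (Matrix.of fun s t => b s (e t)).det := by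
  let b₀ := (Pi.basisFun R m).reindex e.symm
  have hb₀ : b₀.toMatrix b = (Matrix.of fun s t => b s (e t))ᵀ := by
    ext s t
    simp [b₀, toMatrix_apply]
  rw [← Matrix.det_transpose, ← hb₀, ← det_apply]
  exact b₀.isUnit_det b

end Module.Basis

namespace PolyNull

variable {K : Type*} [Field K]

section

variable {m n : Type*} [Fintype m]

theorem natDegree_le_vecDeg (v : m → K[X]) (i : m) : (v i).natDegree ≤ vecDeg v :=
  Finset.le_sup (f := fun i => (v i).natDegree) (Finset.mem_univ i)

theorem natDegree_le_matDeg [Fintype n] (M : Matrix m n K[X]) (i : m) (j : n) :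
    (M i j).natDegree ≤ matDeg M :=
  Finset.le_sup (f := fun ij : m × n => (M ij.1 ij.2).natDegree) (Finset.mem_univ (i, j))

theorem isNullBasis_row_iff {ι : Type*} [Fintype ι] (M : Matrix m n K[X])
    (B : Matrix ι m K[X]) :
    IsNullBasis M B.row ↔
      Function.Injective B.vecMul ∧ LinearMap.range B.vecMulLinear = leftNullMod M := by
  rw [IsNullBasis, vecMul_injective_iff, range_vecMulLinear]

theorem IsNullBasis.mul_left {ι : Type*} [Fintype ι] [DecidableEq ι] {M : Matrix m n K[X]}
    {B : Matrix ι m K[X]} (hB : IsNullBasis M B.row) {T : Matrix ι ι K[X]} (hT : IsUnit T) :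
    IsNullBasis M (T * B).row := by
  rw [isNullBasis_row_iff] at hB ⊢
  have hvecMul : (T * B).vecMulLinear = B.vecMulLinear ∘ₗ T.vecMulLinear :=
    LinearMap.ext fun v => (vecMul_vecMul v T B).symm
  refine ⟨?_, ?_⟩
  · rw [← coe_vecMulLinear, hvecMul]
    exact hB.1.comp (vecMul_injective_of_isUnit hT)
  · rw [hvecMul, LinearMap.range_comp_of_range_eq_top, hB.2]
    exact LinearMap.range_eq_top.mpr (vecMul_surjective_iff_isUnit.mpr hT)

theorem coeff_det_submatrix_sum_vecDeg {ι : Type*} [Fintype ι] [DecidableEq ι]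
    (B : Matrix ι m K[X]) (c : ι → m) :
    (B.submatrix id c).det.coeff (∑ i, vecDeg (B i)) =
      ((leadingRowMatrix B).submatrix id c).det :=
  coeff_det_sum_of_row _ _ fun i j => natDegree_le_vecDeg (B i) (c j)

theorem vecDeg_lt_of_coeff_eq_zero {v : m → K[X]} (hv : v ≠ 0) {D : ℕ}
    (hdeg : ∀ l, (v l).natDegree ≤ D) (hcoeff : ∀ l, (v l).coeff D = 0) : vecDeg v < D := by
  have hlt : ∀ l, v l ≠ 0 → (v l).natDegree < D := fun l hl =>
    (hdeg l).lt_of_ne fun h => hl (leadingCoeff_eq_zero.mp (by rw [leadingCoeff, h, hcoeff]))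
  obtain ⟨l₀, hl₀⟩ := Function.ne_iff.mp hv
  have hD : 0 < D := (Nat.zero_le _).trans_lt (hlt l₀ hl₀)
  refine (Finset.sup_lt_iff hD).mpr fun l _ => ?_
  by_cases hl : v l = 0
  · simpa [hl] using hD
  · exact hlt l hl

theorem exists_isNullBasis_sum_vecDeg_lt {ι : Type*} [Fintype ι]
    {M : Matrix m n K[X]} {B : Matrix ι m K[X]} (hB : IsNullBasis M B.row)
    (hred : ¬ IsRowReduced B) :
    ∃ B' : Matrix ι m K[X], IsNullBasis M B'.row ∧
      ∑ i, vecDeg (B' i) < ∑ i, vecDeg (B i) := by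
  classical
  set δ : ι → ℕ := fun i => vecDeg (B i)
  obtain ⟨g, hg, i₁, hi₁⟩ := Fintype.not_linearIndependent_iff.mp
    fun h : LinearIndependent K (leadingRowMatrix B).row => hred h.rank_matrix
  obtain ⟨i₀, hi₀, hmax⟩ :=
    Finset.exists_max_image (Finset.univ.filter (g · ≠ 0)) δ ⟨i₁, by simpa using hi₁⟩
  have hgi₀ : g i₀ ≠ 0 := (Finset.mem_filter.mp hi₀).2
  have hδ : ∀ i, g i ≠ 0 → δ i ≤ δ i₀ := fun i hi => hmax i (by simpa using hi)
  -- cancel the leading coefficients of row `i₀` against those of the rows of no larger degree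
  let q : ι → K[X] := fun i => C (g i) * X ^ (δ i₀ - δ i)
  let w : m → K[X] := q ᵥ* B
  have hT : IsUnit ((1 : Matrix ι ι K[X]).updateRow i₀ q) := by
    rw [isUnit_iff_isUnit_det, det_updateRow_one]
    simpa [q] using hgi₀
  have hB' : IsNullBasis M (B.updateRow i₀ w).row := by
    simpa [updateRow_mul] using hB.mul_left hT
  have hterm : ∀ i l, (q i * B i l).natDegree ≤ δ i₀ ∧
      (q i * B i l).coeff (δ i₀) = g i * leadingRowMatrix B i l := by
    intro i l
    by_cases hgi : g i = 0
    · simp [q, hgi]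
    · exact ⟨natDegree_C_mul_X_pow_sub_mul_le (natDegree_le_vecDeg (B i) l) (hδ i hgi) _,
        coeff_C_mul_X_pow_sub_mul (hδ i hgi) _ _⟩
  have hw0 : w ≠ 0 := by simpa [row] using hB'.1.ne_zero i₀
  have hwdeg : ∀ l, (w l).natDegree ≤ δ i₀ := fun l =>
    natDegree_sum_le_of_forall_le _ _ fun i _ => (hterm i l).1
  have hwcoeff : ∀ l, (w l).coeff (δ i₀) = 0 := fun l => by
    simp only [w, vecMul, dotProduct, finsetSum_coeff, (hterm _ l).2]
    simpa using congrFun hg l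
  have hlt := vecDeg_lt_of_coeff_eq_zero hw0 hwdeg hwcoeff
  refine ⟨_, hB', Finset.sum_lt_sum (fun i _ => ?_)
    ⟨i₀, Finset.mem_univ _, by simpa using hlt⟩⟩
  by_cases hi : i = i₀
  · subst hi
    simpa using hlt.le
  · simp [updateRow_ne hi]

theorem exists_isNullBasis_isRowReduced {ι : Type*} [Fintype ι]
    {M : Matrix m n K[X]} {B : Matrix ι m K[X]} (hB : IsNullBasis M B.row) :
    ∃ B' : Matrix ι m K[X], IsNullBasis M B'.row ∧ IsRowReduced B' := by
  induction hs : ∑ i, vecDeg (B i) using Nat.strong_induction_on generalizing B with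
  | _ s ih =>
    by_cases hred : IsRowReduced B
    · exact ⟨B, hB, hred⟩
    · obtain ⟨B', hB', hlt⟩ := exists_isNullBasis_sum_vecDeg_lt hB hred
      exact ih _ (hs ▸ hlt) hB' rfl

theorem exists_cols_vecMul_eq_zero [Fintype n] (M : Matrix m n K[X]) :
    ∃ g : Fin (polyRank M) → n, ∀ u : m → K[X], (u ᵥ* M) ∘ g = 0 → u ᵥ* M = 0 := by
  obtain ⟨g, hg⟩ := (ratMat M).exists_cols_vecMul_eq_zero
  refine ⟨g, fun u hu => funext fun j => IsFractionRing.injective K[X] (RatFunc K) ?_⟩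
  have hmap : ∀ j, algebraMap K[X] (RatFunc K) ((u ᵥ* M) j)
      = ((algebraMap K[X] (RatFunc K) ∘ u) ᵥ* ratMat M) j := fun j => RingHom.map_vecMul _ _ _ _
  have hcols : ((algebraMap K[X] (RatFunc K) ∘ u) ᵥ* ratMat M) ∘ g = 0 := funext fun t => by
    rw [Function.comp_apply, ← hmap, show (u ᵥ* M) (g t) = 0 from congrFun hu t, map_zero]
    rfl
  rw [hmap, hg _ hcols, Pi.zero_apply, Pi.zero_apply, map_zero]

variable [DecidableEq m] {ι κ : Type*} [Fintype ι] [DecidableEq ι] [Fintype κ] [DecidableEq κ]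

noncomputable def augmentCols (M : Matrix m n K[X]) (c : ι → m) (g : κ → n) :
    Matrix m (ι ⊕ κ) K[X] :=
  fromCols ((1 : Matrix m m K[X]).submatrix id c) (M.submatrix id g)

theorem IsNullBasis.det_augmentCols_ne_zero {M : Matrix m n K[X]} {B : Matrix ι m K[X]}
    (hB : IsNullBasis M B.row) {c : ι → m} (hc : (B.submatrix id c).det ≠ 0) {g : κ → n}
    (hg : ∀ u : m → K[X], (u ᵥ* M) ∘ g = 0 → u ᵥ* M = 0) (e : ι ⊕ κ ≃ m) :
    ((augmentCols M c g).submatrix e id).det ≠ 0 := by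
  intro h0
  obtain ⟨p, hp, hpU⟩ := exists_vecMul_eq_zero_iff.mpr h0
  set u := p ∘ e.symm
  rw [submatrix_vecMul_equiv, augmentCols, vecMul_fromCols, Function.comp_id,
    ← Sum.elim_zero_zero, Sum.elim_eq_iff, vecMul_submatrix_id, vecMul_submatrix_id,
    vecMul_one] at hpU
  obtain ⟨a, ha⟩ : u ∈ LinearMap.range B.vecMulLinear := by
    rw [((isNullBasis_row_iff M B).mp hB).2]
    exact hg u hpU.2
  rw [vecMulLinear_apply] at ha
  have ha0 : a = 0 := by
    by_contra h
    refine hc (exists_vecMul_eq_zero_iff.mp ⟨a, h, ?_⟩)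
    rw [vecMul_submatrix_id, ha]
    exact hpU.1
  have hu : u = 0 := by rw [← ha, ha0, zero_vecMul]
  exact hp (funext fun s => by simpa [u] using congrFun hu (e s))

theorem IsNullBasis.det_submatrix_dvd {M : Matrix m n K[X]} {B : Matrix ι m K[X]}
    (hB : IsNullBasis M B.row) (b : Module.Basis (ι ⊕ κ) K[X] (m → K[X]))
    (hb : ∀ i, b (Sum.inl i) = B i) (e : ι ⊕ κ ≃ m) (c : ι → m) (g : κ → n) :
    (B.submatrix id c).det ∣ ((augmentCols M c g).submatrix e id).det := by
  set W : Matrix κ m K[X] := Matrix.of fun t => b (Sum.inr t)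
  let V : Matrix (ι ⊕ κ) m K[X] := fromRows B W
  have hV : IsUnit (V.submatrix id e).det := by
    convert b.isUnit_det_of_equiv e using 2
    ext (i | t) l <;> simp [V, W, hb]
  have hBM : B * M = 0 := by
    ext1 i j
    have hi : B i ∈ leftNullMod M := hB.2 ▸ Submodule.subset_span ⟨i, rfl⟩
    exact congrFun (LinearMap.mem_ker.mp hi) j
  have hVU : V * augmentCols M c g = fromBlocks (B.submatrix id c) 0
      (W * (1 : Matrix m m K[X]).submatrix id c) (W * M.submatrix id g) := by
    rw [augmentCols, fromRows_mul_fromCols, mul_submatrix_id, mul_submatrix_id, Matrix.mul_one, hBM,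
      submatrix_zero, Pi.zero_apply, Pi.zero_apply]
  refine hV.dvd_mul_left.mp ⟨(W * M.submatrix id g).det, ?_⟩
  rw [← det_mul, submatrix_mul_equiv, submatrix_id_id, hVU, det_fromBlocks_zero₁₂]

theorem natDegree_det_augmentCols_le [Fintype n] (M : Matrix m n K[X]) (c : ι → m)
    (g : κ → n) (e : ι ⊕ κ ≃ m) :
    ((augmentCols M c g).submatrix e id).det.natDegree ≤ Fintype.card κ * matDeg M := by
  calc _ ≤ ∑ j, Sum.elim (fun _ => 0) (fun _ => matDeg M) j :=
        natDegree_det_le_of_col _ _ ?_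
    _ = _ := by simp [Fintype.sum_sum_type]
  rintro i (j | t)
  · simp only [augmentCols, submatrix_apply, id_eq, fromCols_apply_inl, one_apply, Sum.elim_inl]
    split_ifs <;> simp
  · simpa [augmentCols] using natDegree_le_matDeg M (e i) (g t)

theorem sum_vecDeg_le_of_isRowReduced [Fintype n] {M : Matrix m n K[X]} {B : Matrix ι m K[X]}
    (hB : IsNullBasis M B.row) (hred : IsRowReduced B)
    (hcard : Fintype.card ι = Fintype.card m - polyRank M) :
    ∑ i, vecDeg (B i) ≤ polyRank M * matDeg M := by
  obtain ⟨c, hc⟩ := (leadingRowMatrix B).exists_det_submatrix_ne_zero hred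
  rw [← coeff_det_submatrix_sum_vecDeg] at hc
  obtain ⟨g, hg⟩ := exists_cols_vecMul_eq_zero M
  obtain ⟨r, b, hb⟩ := Module.Basis.exists_extend_of_span_eq_ker M.vecMulLinear hB.1 hB.2
  have hrank : polyRank M ≤ Fintype.card m := rank_le_card_height _
  have hr : r = polyRank M := by
    have := (Module.finrank_eq_card_basis b).symm
    simp only [Module.finrank_fintype_fun_eq_card, Fintype.card_sum, Fintype.card_fin] at this
    omega
  generalize polyRank M = ρ at g hg hcard hrank hr ⊢
  subst hr
  let e : ι ⊕ Fin r ≃ m := Fintype.equivOfCardEq (by simp; omega)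
  have hdet : (B.submatrix id c).det ≠ 0 := fun h => hc (by rw [h, coeff_zero])
  calc ∑ i, vecDeg (B i) ≤ (B.submatrix id c).det.natDegree := le_natDegree_of_ne_zero hc
    _ ≤ ((augmentCols M c g).submatrix e id).det.natDegree :=
        natDegree_le_of_dvd (hB.det_submatrix_dvd b hb e c g) (hB.det_augmentCols_ne_zero hdet hg e)
    _ ≤ Fintype.card (Fin r) * matDeg M := natDegree_det_augmentCols_le M c g e
    _ = r * matDeg M := by rw [Fintype.card_fin]

end

theorem kronecker_sum_le_rank_mul_degree_general
    {m n d r k : ℕ} (M : Matrix (Fin m) (Fin n) (Polynomial K))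
    (hdeg : matDeg M = d) (hrank : polyRank M = r) (hk : k = m - r)
    (N : Fin k → (Fin m → Polynomial K)) (δ : Fin k → ℕ)
    (hN : IsMinimalNullBasis M N) (hδ : ∀ i, vecDeg (N i) = δ i) :
    (∑ i, δ i) ≤ r * d ∧
    ∃ N' : Fin k → (Fin m → Polynomial K),
      IsNullBasis M N' ∧ (∑ i, vecDeg (N' i)) ≤ r * d := by
  obtain ⟨B, hB, hred⟩ := exists_isNullBasis_isRowReduced (B := Matrix.of N) hN.1
  have hB_le : ∑ i, vecDeg (B i) ≤ r * d := by
    subst hdeg hrank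
    exact sum_vecDeg_le_of_isRowReduced hB hred (by simp [hk])
  have hN_le : ∑ i, vecDeg (N i) ≤ ∑ i, vecDeg (B i) :=
    Finset.sum_le_sum_of_card_filter_le _ _ (hN.2 B.row hB)
  simp only [hδ] at hN_le
  exact ⟨hN_le.trans hB_le, B.row, hB, hB_le⟩

/-- The Kronecker indices of a degree-`d`, rank-`r` polynomial matrix
sum to at most `r d`; in particular its left nullspace module has a basis of `m − r`
polynomial vectors of degree sum at most `r d`. -/
theorem kronecker_sum_le_rank_mul_degree
    {m n d r k : ℕ} (M : Matrix (Fin m) (Fin n) (Polynomial K))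
    (hdeg : matDeg M = d) (hrank : polyRank M = r) (hk : k = m - r)
    (N : Fin k → (Fin m → Polynomial K)) (δ : Fin k → ℕ)
    (hN : IsMinimalNullBasis M N) (hδ : ∀ i, vecDeg (N i) = δ i) (hmono : Monotone δ) :
    (∑ i, δ i) ≤ r * d ∧
    ∃ N' : Fin k → (Fin m → Polynomial K),
      IsNullBasis M N' ∧ (∑ i, vecDeg (N' i)) ≤ r * d :=
  kronecker_sum_le_rank_mul_degree_general M hdeg hrank hk N δ hN hδ

end PolyNull
end
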